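/- For 0 < q < 1 and t, s > 0, the q-Beta function \beta_q(t,s) = \Gamma_q(t)\Gamma_q(s)/\Gamma_q(t+s) has the q-integral representation \beta_q(t,s) = \int_0^1 x^{t-1} (1 - qx)_q^{s-1} d_q x, where the Jackson integral is \int_0^1 f(x) d_q x = (1-q)\sum_{j=0}^\infty q^j f(q^j). -/

import Mathlib

open Finset Real Filter Topology

/-- The infinite q-Pochhammer symbol `(a; q)_∞`. -/
noncomputable def qPochInf (a q : ℝ) : ℝ := ∏' j : ℕ, (1 - a * q ^ j)

/-- The q-Gamma function `Γ_q(t) = (q;q)_∞ (1-q)^{1-t} / (q^t; q)_∞`. -/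
noncomputable def qGamma (q t : ℝ) : ℝ :=
  qPochInf q q * (1 - q) ^ (1 - t) / qPochInf (q ^ t) q

section Aux

variable {q : ℝ}

lemma qfactor_pos (hq0 : 0 < q) (hq1 : q < 1) {b : ℝ} (hb0 : 0 ≤ b) (hb1 : b < 1) (j : ℕ) :
    0 < 1 - b * q ^ j := by
  have h1 : q ^ j ≤ 1 := pow_le_one₀ hq0.le hq1.le
  have h2 : 0 < q ^ j := pow_pos hq0 j
  nlinarith

lemma qsummable_logs (hq0 : 0 < q) (hq1 : q < 1) {b : ℝ} (hb0 : 0 ≤ b) (hb1 : b < 1) :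
    Summable (fun j : ℕ => Real.log (1 - b * q ^ j)) := by
  apply Summable.of_abs
  apply Summable.of_nonneg_of_le (f := fun j : ℕ => (b / (1 - b)) * q ^ j)
    (fun j => abs_nonneg _)
  · intro j
    have hq2 : 0 < q ^ j := pow_pos hq0 j
    have hq3 : q ^ j ≤ 1 := pow_le_one₀ hq0.le hq1.le
    have hle : b * q ^ j ≤ b := by nlinarith
    have hpos := qfactor_pos hq0 hq1 hb0 hb1 j
    have hlog : Real.log (1 - b * q ^ j) ≤ 0 :=
      Real.log_nonpos (by linarith) (by nlinarith)
    rw [abs_of_nonpos hlog]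
    have h1 : Real.log ((1 - b * q ^ j)⁻¹) ≤ (1 - b * q ^ j)⁻¹ - 1 :=
      Real.log_le_sub_one_of_pos (by positivity)
    rw [Real.log_inv] at h1
    have h2 : (1 - b * q ^ j)⁻¹ - 1 = (b * q ^ j) / (1 - b * q ^ j) := by
      field_simp
      ring
    have h3 : (b * q ^ j) / (1 - b * q ^ j) ≤ (b * q ^ j) / (1 - b) := by
      apply div_le_div_of_nonneg_left (by positivity) (by linarith) (by nlinarith)
    have h4 : (b * q ^ j) / (1 - b) = (b / (1 - b)) * q ^ j := by ring
    linarith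
  · exact (summable_geometric_of_lt_one hq0.le hq1).mul_left _

lemma qPoch_aux (hq0 : 0 < q) (hq1 : q < 1) {b : ℝ} (hb0 : 0 ≤ b) (hb1 : b < 1) :
    HasProd (fun j : ℕ => 1 - b * q ^ j) (qPochInf b q) ∧
      0 < qPochInf b q ∧ qPochInf b q ≤ 1 := by
  have hs := (qsummable_logs hq0 hq1 hb0 hb1).hasSum
  have hp := hs.rexp
  have hfun : (rexp ∘ fun j : ℕ => Real.log (1 - b * q ^ j)) = fun j : ℕ => 1 - b * q ^ j :=
    funext fun j => Real.exp_log (qfactor_pos hq0 hq1 hb0 hb1 j)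
  rw [hfun] at hp
  have htp : qPochInf b q = rexp (∑' j : ℕ, Real.log (1 - b * q ^ j)) := hp.tprod_eq
  refine ⟨htp ▸ hp, htp ▸ Real.exp_pos _, ?_⟩
  rw [htp]
  have hnp : (∑' j : ℕ, Real.log (1 - b * q ^ j)) ≤ 0 := by
    apply tsum_nonpos
    intro j
    have h2 : 0 < q ^ j := pow_pos hq0 j
    exact Real.log_nonpos (qfactor_pos hq0 hq1 hb0 hb1 j).le (by nlinarith)
  calc rexp (∑' j : ℕ, Real.log (1 - b * q ^ j)) ≤ rexp 0 := Real.exp_le_exp.mpr hnp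
    _ = 1 := Real.exp_zero

lemma qPoch_shift (hq0 : 0 < q) (hq1 : q < 1) {b : ℝ} (hb0 : 0 ≤ b) (hb1 : b < 1) (n : ℕ) :
    qPochInf b q = (∏ k ∈ range n, (1 - b * q ^ k)) * qPochInf (b * q ^ n) q := by
  have hqn0 : 0 ≤ b * q ^ n := by positivity
  have hqn1 : b * q ^ n < 1 := by
    have h2 : q ^ n ≤ 1 := pow_le_one₀ hq0.le hq1.le
    have h3 : 0 < q ^ n := pow_pos hq0 n
    nlinarith
  have hm0 : Multipliable (fun i : ℕ => 1 - b * q ^ n * q ^ i) :=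
    (qPoch_aux hq0 hq1 hqn0 hqn1).1.multipliable
  have hfeq : (fun i : ℕ => 1 - b * q ^ n * q ^ i) = (fun i : ℕ => 1 - b * q ^ (i + n)) :=
    funext fun i => by rw [pow_add]; ring
  have hm2 : Multipliable (fun i : ℕ => 1 - b * q ^ (i + n)) := hfeq ▸ hm0
  have h := Multipliable.prod_mul_tprod_nat_mul' (f := fun j : ℕ => 1 - b * q ^ j) (k := n) hm2
  rw [qPochInf, ← h]
  congr 1
  rw [qPochInf]
  exact tprod_congr fun i => by simp only [pow_add]; ring

/-- coefficients of the q-binomial series -/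
noncomputable def qc (q a : ℝ) (n : ℕ) : ℝ := ∏ k ∈ range n, (1 - a * q ^ k) / (1 - q * q ^ k)

lemma qc_rec (hq0 : 0 < q) (hq1 : q < 1) (a : ℝ) (n : ℕ) :
    qc q a (n + 1) * (1 - q * q ^ n) = qc q a n * (1 - a * q ^ n) := by
  have h := qfactor_pos hq0 hq1 hq0.le hq1 n
  rw [qc, qc, prod_range_succ, mul_assoc, div_mul_cancel₀ _ h.ne']

lemma qc_bounds (hq0 : 0 < q) (hq1 : q < 1) {a : ℝ} (ha0 : 0 ≤ a) (ha1 : a < 1) (n : ℕ) :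
    0 ≤ qc q a n ∧ qc q a n ≤ 1 / qPochInf q q := by
  have hPq := qPoch_aux hq0 hq1 hq0.le hq1
  have hD : 0 < ∏ k ∈ range n, (1 - q * q ^ k) :=
    Finset.prod_pos fun k _ => qfactor_pos hq0 hq1 hq0.le hq1 k
  have hN0 : 0 ≤ ∏ k ∈ range n, (1 - a * q ^ k) :=
    (Finset.prod_pos fun k _ => qfactor_pos hq0 hq1 ha0 ha1 k).le
  have hN1 : (∏ k ∈ range n, (1 - a * q ^ k)) ≤ 1 := by
    apply Finset.prod_le_one (fun k _ => (qfactor_pos hq0 hq1 ha0 ha1 k).le)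
    intro k _
    have h2 : 0 < q ^ k := pow_pos hq0 k
    nlinarith
  have hqn0 : 0 ≤ q * q ^ n := by positivity
  have hqn1 : q * q ^ n < 1 := by
    have h2 : q ^ n ≤ 1 := pow_le_one₀ hq0.le hq1.le
    nlinarith
  have hPD : qPochInf q q ≤ ∏ k ∈ range n, (1 - q * q ^ k) := by
    have h1 := qPoch_shift hq0 hq1 hq0.le hq1 n
    have h2 := (qPoch_aux hq0 hq1 hqn0 hqn1).2.2
    have h3 := (qPoch_aux hq0 hq1 hqn0 hqn1).2.1
    nlinarith [h1]
  have hqceq : qc q a n = (∏ k ∈ range n, (1 - a * q ^ k)) / ∏ k ∈ range n, (1 - q * q ^ k) := by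
    rw [qc, Finset.prod_div_distrib]
  constructor
  · rw [hqceq]; positivity
  · rw [hqceq]
    exact div_le_div₀ zero_le_one hN1 hPq.2.1 hPD

lemma qsummable_c (hq0 : 0 < q) (hq1 : q < 1) {a : ℝ} (ha0 : 0 ≤ a) (ha1 : a < 1)
    {z : ℝ} (hz0 : 0 ≤ z) (hz1 : z < 1) :
    Summable (fun n : ℕ => qc q a n * z ^ n) := by
  apply Summable.of_nonneg_of_le
    (fun n => mul_nonneg (qc_bounds hq0 hq1 ha0 ha1 n).1 (pow_nonneg hz0 n))
    (fun n => mul_le_mul_of_nonneg_right (qc_bounds hq0 hq1 ha0 ha1 n).2 (pow_nonneg hz0 n))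
  exact (summable_geometric_of_lt_one hz0 hz1).mul_left _

/-- the q-binomial theorem -/
lemma qbinom (hq0 : 0 < q) (hq1 : q < 1) {a z : ℝ} (ha0 : 0 ≤ a) (ha1 : a < 1)
    (hz0 : 0 ≤ z) (hz1 : z < 1) :
    (∑' n : ℕ, qc q a n * z ^ n) * qPochInf z q = qPochInf (a * z) q := by
  set F : ℝ → ℝ := fun w => ∑' n : ℕ, qc q a n * w ^ n with hFdef
  have hPq := qPoch_aux hq0 hq1 hq0.le hq1
  -- functional equation
  have key : ∀ w : ℝ, 0 ≤ w → w < 1 → (1 - w) * F w = (1 - a * w) * F (q * w) := by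
    intro w hw0 hw1
    have hqw0 : 0 ≤ q * w := by positivity
    have hqw1 : q * w < 1 := by nlinarith
    have S1 := qsummable_c hq0 hq1 ha0 ha1 hw0 hw1
    have S2 := qsummable_c hq0 hq1 ha0 ha1 hqw0 hqw1
    have h1 : F w - F (q * w) = ∑' n : ℕ, (qc q a n * w ^ n - qc q a n * (q * w) ^ n) :=
      (Summable.tsum_sub S1 S2).symm
    have Sd : Summable (fun n : ℕ => qc q a n * w ^ n - qc q a n * (q * w) ^ n) := S1.sub S2
    have h2 : (∑' n : ℕ, (qc q a n * w ^ n - qc q a n * (q * w) ^ n))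
        = ∑' n : ℕ, (qc q a (n + 1) * w ^ (n + 1) - qc q a (n + 1) * (q * w) ^ (n + 1)) := by
      rw [Summable.tsum_eq_zero_add Sd]
      simp
    have h3 : ∀ n : ℕ, qc q a (n + 1) * w ^ (n + 1) - qc q a (n + 1) * (q * w) ^ (n + 1)
        = w * (qc q a n * w ^ n) - a * w * (qc q a n * (q * w) ^ n) := by
      intro n
      have hrec := qc_rec hq0 hq1 a n
      linear_combination (w ^ (n + 1)) * hrec
    have h5 : (∑' n : ℕ, (w * (qc q a n * w ^ n) - a * w * (qc q a n * (q * w) ^ n)))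
        = w * F w - a * w * F (q * w) := by
      rw [Summable.tsum_sub (S1.mul_left w) (S2.mul_left (a * w)), S1.tsum_mul_left w,
        S2.tsum_mul_left (a * w)]
    have hcomb : F w - F (q * w) = w * F w - a * w * F (q * w) := by
      rw [h1, h2, tsum_congr h3, h5]
    linear_combination hcomb
  -- iteration
  have iter : ∀ m : ℕ, F z * ∏ k ∈ range m, (1 - z * q ^ k)
      = F (q ^ m * z) * ∏ k ∈ range m, (1 - a * z * q ^ k) := by
    intro m
    induction m with
    | zero => simp
    | succ m ih =>
      have hle : q ^ m ≤ 1 := pow_le_one₀ hq0.le hq1.le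
      have hpos : 0 < q ^ m := pow_pos hq0 m
      have hw0 : 0 ≤ q ^ m * z := by positivity
      have hw1 : q ^ m * z < 1 := by nlinarith
      have hk := key (q ^ m * z) hw0 hw1
      have hq' : q * (q ^ m * z) = q ^ (m + 1) * z := by ring
      rw [hq'] at hk
      rw [prod_range_succ, prod_range_succ, ← mul_assoc, ih]
      linear_combination (∏ k ∈ range m, (1 - a * z * q ^ k)) * hk
  -- limits
  have haz0 : 0 ≤ a * z := mul_nonneg ha0 hz0
  have haz1 : a * z < 1 := by nlinarith
  have hPz := qPoch_aux hq0 hq1 hz0 hz1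
  have hPaz := qPoch_aux hq0 hq1 haz0 haz1
  have t1 : Tendsto (fun m : ℕ => ∏ k ∈ range m, (1 - z * q ^ k)) atTop
      (𝓝 (qPochInf z q)) := hPz.1.tendsto_prod_nat
  have t2 : Tendsto (fun m : ℕ => ∏ k ∈ range m, (1 - a * z * q ^ k)) atTop
      (𝓝 (qPochInf (a * z) q)) := hPaz.1.tendsto_prod_nat
  -- F bound near 0
  have hFbound : ∀ w : ℝ, 0 ≤ w → w ≤ z →
      1 ≤ F w ∧ F w ≤ 1 + (1 / qPochInf q q) * (1 - z)⁻¹ * w := by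
    intro w hw0 hwz
    have hw1 : w < 1 := lt_of_le_of_lt hwz hz1
    have S := qsummable_c hq0 hq1 ha0 ha1 hw0 hw1
    have hF0 : F w = 1 + ∑' n : ℕ, qc q a (n + 1) * w ^ (n + 1) := by
      rw [hFdef]
      simp only
      rw [Summable.tsum_eq_zero_add S]
      simp [qc]
    have hSt : Summable (fun n : ℕ => qc q a (n + 1) * w ^ (n + 1)) :=
      (summable_nat_add_iff (f := fun n : ℕ => qc q a n * w ^ n) 1).2 S
    have htail0 : 0 ≤ ∑' n : ℕ, qc q a (n + 1) * w ^ (n + 1) :=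
      tsum_nonneg fun n => mul_nonneg (qc_bounds hq0 hq1 ha0 ha1 (n + 1)).1
        (pow_nonneg hw0 _)
    have hSg : Summable (fun n : ℕ => (1 / qPochInf q q) * w * z ^ n) :=
      (summable_geometric_of_lt_one hz0 hz1).mul_left _
    have htail1 : (∑' n : ℕ, qc q a (n + 1) * w ^ (n + 1))
        ≤ ∑' n : ℕ, (1 / qPochInf q q) * w * z ^ n := by
      apply Summable.tsum_le_tsum _ hSt hSg
      intro n
      have hb := qc_bounds hq0 hq1 ha0 ha1 (n + 1)
      have hwn : w ^ (n + 1) ≤ w * z ^ n := by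
        rw [pow_succ']
        exact mul_le_mul_of_nonneg_left (pow_le_pow_left₀ hw0 hwz n) hw0
      calc qc q a (n + 1) * w ^ (n + 1) ≤ (1 / qPochInf q q) * w ^ (n + 1) :=
            mul_le_mul_of_nonneg_right hb.2 (pow_nonneg hw0 _)
        _ ≤ (1 / qPochInf q q) * (w * z ^ n) := by
            apply mul_le_mul_of_nonneg_left hwn (div_nonneg zero_le_one hPq.2.1.le)
        _ = (1 / qPochInf q q) * w * z ^ n := by ring
    have hgeo : (∑' n : ℕ, (1 / qPochInf q q) * w * z ^ n)
        = (1 / qPochInf q q) * w * (1 - z)⁻¹ := by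
      rw [tsum_mul_left, tsum_geometric_of_lt_one hz0 hz1]
    constructor
    · rw [hF0]; linarith
    · rw [hF0]
      have : (1 / qPochInf q q) * w * (1 - z)⁻¹ = (1 / qPochInf q q) * (1 - z)⁻¹ * w := by ring
      linarith [htail1.trans_eq (hgeo.trans this)]
  have t3 : Tendsto (fun m : ℕ => F (q ^ m * z)) atTop (𝓝 1) := by
    have hq' : Tendsto (fun m : ℕ => q ^ m) atTop (𝓝 0) :=
      tendsto_pow_atTop_nhds_zero_of_lt_one hq0.le hq1
    have hupper : Tendsto (fun m : ℕ => 1 + (1 / qPochInf q q) * (1 - z)⁻¹ * (q ^ m * z))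
        atTop (𝓝 1) := by
      have h1 : Tendsto (fun m : ℕ => q ^ m * z) atTop (𝓝 0) := by
        simpa using hq'.mul_const z
      have h2 := (h1.const_mul ((1 / qPochInf q q) * (1 - z)⁻¹)).const_add 1
      simpa using h2
    have hb : ∀ m : ℕ, 0 ≤ q ^ m * z ∧ q ^ m * z ≤ z := by
      intro m
      refine ⟨by positivity, ?_⟩
      have := pow_le_one₀ hq0.le hq1.le (n := m)
      nlinarith [pow_pos hq0 m]
    refine tendsto_of_tendsto_of_tendsto_of_le_of_le tendsto_const_nhds hupper ?_ ?_
    · intro m; exact (hFbound _ (hb m).1 (hb m).2).1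
    · intro m; exact (hFbound _ (hb m).1 (hb m).2).2
  have lim1 : Tendsto (fun m : ℕ => F z * ∏ k ∈ range m, (1 - z * q ^ k)) atTop
      (𝓝 (F z * qPochInf z q)) := t1.const_mul (F z)
  have lim2 : Tendsto (fun m : ℕ => F (q ^ m * z) * ∏ k ∈ range m, (1 - a * z * q ^ k)) atTop
      (𝓝 (1 * qPochInf (a * z) q)) := t3.mul t2
  have := tendsto_nhds_unique (lim1.congr iter) lim2
  simpa using this

end Aux

/-- The q-Beta function `β_q(t,s) = Γ_q(t)Γ_q(s)/Γ_q(t+s)` has the Jackson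
q-integral representation `β_q(t,s) = ∫_0^1 x^{t-1} (1-qx)_q^{s-1} d_q x`, where
`(1-qx)_q^{s-1} = (qx;q)_∞/(q^s x;q)_∞` and
`∫_0^1 f d_q x = (1-q)∑_{j≥0} q^j f(q^j)`. -/
theorem q_beta_integral (q : ℝ) (hq0 : 0 < q) (hq1 : q < 1)
    (t s : ℝ) (ht : 0 < t) (hs : 0 < s) :
    qGamma q t * qGamma q s / qGamma q (t + s) =
      (1 - q) * ∑' j : ℕ,
        q ^ j * (q ^ j : ℝ) ^ (t - 1) *
          (qPochInf (q * q ^ j) q / qPochInf (q ^ s * q ^ j) q) := by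
  have h1q : 0 < 1 - q := by linarith
  have ha0 : 0 < q ^ s := rpow_pos_of_pos hq0 s
  have ha1 : q ^ s < 1 := rpow_lt_one hq0.le hq1 hs
  have hz0 : 0 < q ^ t := rpow_pos_of_pos hq0 t
  have hz1 : q ^ t < 1 := rpow_lt_one hq0.le hq1 ht
  have hts0 : 0 < q ^ (t + s) := rpow_pos_of_pos hq0 (t + s)
  have hts1 : q ^ (t + s) < 1 := rpow_lt_one hq0.le hq1 (by linarith)
  have hPq := qPoch_aux hq0 hq1 hq0.le hq1
  have hPa := qPoch_aux hq0 hq1 ha0.le ha1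
  have hPz := qPoch_aux hq0 hq1 hz0.le hz1
  have hPts := qPoch_aux hq0 hq1 hts0.le hts1
  -- rewrite each term of the sum
  have hterm : ∀ j : ℕ,
      q ^ j * (q ^ j : ℝ) ^ (t - 1) *
        (qPochInf (q * q ^ j) q / qPochInf (q ^ s * q ^ j) q)
      = (qPochInf q q / qPochInf (q ^ s) q) * (qc q (q ^ s) j * (q ^ t) ^ j) := by
    intro j
    have hqj : (0:ℝ) < q ^ j := pow_pos hq0 j
    have hD : 0 < ∏ k ∈ range j, (1 - q * q ^ k) :=
      Finset.prod_pos fun k _ => qfactor_pos hq0 hq1 hq0.le hq1 k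
    have hE : 0 < ∏ k ∈ range j, (1 - q ^ s * q ^ k) :=
      Finset.prod_pos fun k _ => qfactor_pos hq0 hq1 ha0.le ha1 k
    -- power part
    have hpow : q ^ j * (q ^ j : ℝ) ^ (t - 1) = (q ^ t) ^ j := by
      rw [← Real.rpow_natCast q j, ← Real.rpow_mul hq0.le, ← Real.rpow_add hq0,
        ← Real.rpow_natCast (q ^ t) j, ← Real.rpow_mul hq0.le]
      congr 1
      ring
    -- Pochhammer parts
    have hshift1 := qPoch_shift hq0 hq1 hq0.le hq1 j
    have hshift2 := qPoch_shift hq0 hq1 ha0.le ha1 j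
    have hP1pos : 0 < qPochInf (q * q ^ j) q := by
      have hb1 : q * q ^ j < 1 := by
        have := pow_le_one₀ hq0.le hq1.le (n := j); nlinarith
      exact (qPoch_aux hq0 hq1 (by positivity) hb1).2.1
    have hP2pos : 0 < qPochInf (q ^ s * q ^ j) q := by
      have hb1 : q ^ s * q ^ j < 1 := by
        have := pow_le_one₀ hq0.le hq1.le (n := j); nlinarith
      exact (qPoch_aux hq0 hq1 (by positivity) hb1).2.1
    have hqceq : qc q (q ^ s) j
        = (∏ k ∈ range j, (1 - q ^ s * q ^ k)) / ∏ k ∈ range j, (1 - q * q ^ k) := by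
      rw [qc, Finset.prod_div_distrib]
    have e1 : qPochInf (q * q ^ j) q = qPochInf q q / ∏ k ∈ range j, (1 - q * q ^ k) := by
      rw [eq_div_iff hD.ne']
      linear_combination -hshift1
    have e2 : qPochInf (q ^ s * q ^ j) q
        = qPochInf (q ^ s) q / ∏ k ∈ range j, (1 - q ^ s * q ^ k) := by
      rw [eq_div_iff hE.ne']
      linear_combination -hshift2
    rw [hpow, hqceq, e1, e2]
    field_simp
  rw [tsum_congr hterm, tsum_mul_left]
  have hst : q ^ s * q ^ t = q ^ (t + s) := by
    rw [← Real.rpow_add hq0]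
    congr 1
    ring
  have hsum : (∑' j : ℕ, qc q (q ^ s) j * (q ^ t) ^ j)
      = qPochInf (q ^ (t + s)) q / qPochInf (q ^ t) q := by
    have hb := qbinom hq0 hq1 ha0.le ha1 hz0.le hz1
    rw [hst] at hb
    rw [eq_div_iff hPz.2.1.ne']
    exact hb
  rw [hsum]
  have hAB : (1 - q) ^ (1 - t) * (1 - q) ^ (1 - s) = (1 - q) ^ (1 - (t + s)) * (1 - q) := by
    have h : (1:ℝ) - t + (1 - s) = (1 - (t + s)) + 1 := by ring
    rw [← Real.rpow_add h1q, h, Real.rpow_add h1q, Real.rpow_one]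
  have hrp1 : (0:ℝ) < (1 - q) ^ (1 - t) := rpow_pos_of_pos h1q _
  have hrp2 : (0:ℝ) < (1 - q) ^ (1 - s) := rpow_pos_of_pos h1q _
  have hrp3 : (0:ℝ) < (1 - q) ^ (1 - (t + s)) := rpow_pos_of_pos h1q _
  simp only [qGamma]
  field_simp
  rw [mul_assoc (qPochInf q q) ((1 - q) ^ (1 - t)), hAB]
  ring
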